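/- If (X, X₀, R) is a 2-precontact space, then X is a compact topological space. -/

import Mathlib

/- An ultrafilter `F` on `X` induces the family `{A ∈ CO(X₀) | cl_X A ∈ F}`, which is a clan by
(PCS4); by (PCS5) it is `Γ_{x,X₀}` for some point `x`, and since the complements of the sets
`cl_X A` form an open base (PCS3), `F` converges to `x`. -/

open TopologicalSpace

/-- The relation `C#` associated to a precontact relation `C`. -/
def CSharp {B : Type*} [BooleanAlgebra B] (C : B → B → Prop) (a b : B) : Prop :=
  C a b ∨ C b a ∨ a ⊓ b ≠ ⊥

/-- A clan of a precontact algebra `(B,C)`. -/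
def IsClan {B : Type*} [BooleanAlgebra B] (C : B → B → Prop) (Γ : Set B) : Prop :=
  Γ.Nonempty ∧ ⊥ ∉ Γ ∧ (∀ a ∈ Γ, ∀ b : B, a ≤ b → b ∈ Γ) ∧
    (∀ a b : B, a ⊔ b ∈ Γ → a ∈ Γ ∨ b ∈ Γ) ∧
    (∀ a ∈ Γ, ∀ b ∈ Γ, CSharp C a b)

/-- For a clopen subset `A` of the subspace `X₀`, its closure `cl_X A` in the ambient space. -/
def embCl {X : Type*} [TopologicalSpace X] (X₀ : Set X) (A : Clopens ↥X₀) : Set X :=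
  closure (Subtype.val '' (A : Set ↥X₀))

/-- The precontact relation `C_R` on `CO(X₀)` induced by an adjacency relation `R` on `X₀`. -/
def clopCR {X : Type*} [TopologicalSpace X] {X₀ : Set X}
    (R : ↥X₀ → ↥X₀ → Prop) (A B : Clopens ↥X₀) : Prop :=
  ∃ x ∈ (A : Set ↥X₀), ∃ y ∈ (B : Set ↥X₀), R x y

/-- A 2-precontact space `(X, X₀, R)`. -/
structure TwoPrecontact (X : Type*) [TopologicalSpace X] (X₀ : Set X)
    (R : ↥X₀ → ↥X₀ → Prop) : Prop where
  /-- (PCS1): `X₀` is dense in `X` -/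
  dense : Dense X₀
  /-- (PCS1): `X` is a `T₀`-space -/
  t0 : T0Space X
  /-- (PCS2): `X₀` is compact -/
  compact₀ : CompactSpace ↥X₀
  /-- (PCS2): `X₀` is Hausdorff -/
  t2₀ : T2Space ↥X₀
  /-- (PCS2): `X₀` is zero-dimensional -/
  zdim₀ : IsTopologicalBasis {s : Set ↥X₀ | IsClopen s}
  /-- (PCS2): `R` is a closed relation on `X₀` -/
  closedR : IsClosed {p : ↥X₀ × ↥X₀ | R p.1 p.2}
  /-- (PCS3): `RC(X,X₀)` is a closed base for `X` -/
  base : ∀ U : Set X, IsOpen U → ∀ x ∈ U,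
    ∃ A : Clopens ↥X₀, x ∈ (embCl X₀ A)ᶜ ∧ (embCl X₀ A)ᶜ ⊆ U
  /-- (PCS4) -/
  pcs4 : ∀ A B : Clopens ↥X₀, (embCl X₀ A ∩ embCl X₀ B).Nonempty →
    CSharp (clopCR R) A B
  /-- (PCS5): every clan of `(CO(X₀), C_R)` is of the form `Γ_{x,X₀}` -/
  pcs5 : ∀ Γ : Set (Clopens ↥X₀), IsClan (clopCR R) Γ →
    ∃ x : X, Γ = {A : Clopens ↥X₀ | x ∈ embCl X₀ A}

section embCl

variable {X : Type*} [TopologicalSpace X] {X₀ : Set X}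

theorem embCl_top (hX₀ : Dense X₀) : embCl X₀ ⊤ = Set.univ := by
  simp [embCl, hX₀.closure_eq]

theorem embCl_bot : embCl X₀ ⊥ = ∅ := by
  simp [embCl]

theorem embCl_mono {A B : Clopens ↥X₀} (hAB : A ≤ B) : embCl X₀ A ⊆ embCl X₀ B :=
  closure_mono (Set.image_mono hAB)

theorem embCl_sup (A B : Clopens ↥X₀) : embCl X₀ (A ⊔ B) = embCl X₀ A ∪ embCl X₀ B := by
  rw [embCl, embCl, embCl, ← closure_union, ← Set.image_union]
  rfl

theorem isClan_setOf_embCl_mem (hX₀ : Dense X₀) {C : Clopens ↥X₀ → Clopens ↥X₀ → Prop}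
    (hC : ∀ A B : Clopens ↥X₀, (embCl X₀ A ∩ embCl X₀ B).Nonempty → CSharp C A B)
    (F : Ultrafilter X) : IsClan C {A | embCl X₀ A ∈ F} := by
  refine ⟨⟨⊤, ?_⟩, ?_, ?_, ?_, ?_⟩
  · show embCl X₀ ⊤ ∈ F
    rw [embCl_top hX₀]
    exact Filter.univ_mem
  · show embCl X₀ ⊥ ∉ F
    rw [embCl_bot]
    exact F.empty_notMem
  · exact fun A hA B hAB => F.mem_of_superset hA (embCl_mono hAB)
  · exact fun A B hAB => Ultrafilter.union_mem_iff.mp (embCl_sup A B ▸ hAB)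
  · exact fun A hA B hB => hC A B (F.nonempty_of_mem (F.inter_mem hA hB))

end embCl

theorem stmt10 {X : Type*} [TopologicalSpace X] {X₀ : Set X}
    {R : ↥X₀ → ↥X₀ → Prop} (h : TwoPrecontact X X₀ R) :
    CompactSpace X := by
  rw [← isCompact_univ_iff, isCompact_iff_ultrafilter_le_nhds]
  intro F _
  obtain ⟨x, hx⟩ := h.pcs5 _ (isClan_setOf_embCl_mem h.dense h.pcs4 F)
  refine ⟨x, Set.mem_univ x, fun U hU => ?_⟩
  obtain ⟨V, hVU, hV, hxV⟩ := mem_nhds_iff.mp hU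
  obtain ⟨A, hxA, hAV⟩ := h.base V hV x hxV
  have hAF : embCl X₀ A ∉ F := fun hA => hxA (hx.subset hA)
  exact F.mem_of_superset (Ultrafilter.compl_mem_iff_notMem.mpr hAF) (hAV.trans hVU)
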